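/- arXiv:1310.0898 — 13 statements merged into one kernel-verified Lean document; each statement's English description precedes it below -/
import Mathlib

section
/- For any fixed positive integer b with b ≠ 3, there are only finitely many positive integers n satisfying σ₂(n) − n² = b·n, i.e., the sum of the squares of the proper divisors of n equals b·n. -/
/-!
Write `n = p * m` with `p` the least prime factor of `n`. Since `m` is a proper divisor,
`m² ≤ σ₂(n) - n² = b p m`, so `m ≤ b p`. If `m = 1` or `m` is prime, the equation has no
solution: for `n = p q` with `p ≠ q` it becomes `p² + q² + 1 = b p q`, which by Vieta jumping
is solvable in positive integers only for `b = 3`. Otherwise every prime factor of `m` is at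
least `p`, so `p² ≤ m ≤ b p`, whence `p ≤ b` and `n ≤ b³`.
-/

open scoped ArithmeticFunction.sigma
open ArithmeticFunction

theorem exists_vieta_jump {b p q : ℕ} (hp : 0 < p) (hpq : p < q)
    (h : p ^ 2 + q ^ 2 + 1 = b * (p * q)) :
    ∃ r, 0 < r ∧ r ≤ p ∧ r ^ 2 + p ^ 2 + 1 = b * (r * p) := by
  have hq : q < b * p := by nlinarith
  -- `r` is the other root of `X² - b p X + (p² + 1)`.
  obtain ⟨r, hr⟩ : ∃ r, b * p = q + r := ⟨b * p - q, by omega⟩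
  have hqr : q * r = p ^ 2 + 1 := by nlinarith
  refine ⟨r, Nat.pos_of_ne_zero ?_, by nlinarith, by nlinarith⟩
  rintro rfl
  omega

theorem sq_add_sq_add_one_ne_mul {b : ℕ} (hb3 : b ≠ 3) {p q : ℕ} (hp : 0 < p) (hq : 0 < q) :
    p ^ 2 + q ^ 2 + 1 ≠ b * (p * q) := by
  wlog hpq : p ≤ q generalizing p q
  · rw [add_comm (p ^ 2), mul_comm p]
    exact this hq hp (by omega)
  induction q using Nat.strong_induction_on generalizing p with
  | _ q ih =>
    intro h
    rcases hpq.eq_or_lt with rfl | hlt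
    · have h1 : p ^ 2 * (b - 2) = 1 := by
        rcases Nat.lt_or_ge b 2 with hb | hb
        · nlinarith
        · zify [hb] at h ⊢
          linarith
      obtain rfl : p = 1 := by simpa using Nat.eq_one_of_mul_eq_one_right h1
      omega
    · obtain ⟨r, hr, hrp, h'⟩ := exists_vieta_jump hp hlt h
      exact ih p hlt hr hp hrp h'

theorem pow_add_pow_le_sigma {k n d : ℕ} (hn : n ≠ 0) (hd : d ∣ n) (hdn : d ≠ n) :
    n ^ k + d ^ k ≤ σ k n := by
  rw [sigma_apply, ← Finset.sum_pair (f := (· ^ k)) hdn.symm]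
  exact Finset.sum_le_sum_of_subset (Finset.insert_subset_iff.mpr
    ⟨Nat.mem_divisors_self n hn, Finset.singleton_subset_iff.mpr (Nat.mem_divisors.mpr ⟨hd, hn⟩)⟩)

theorem sigma_two_prime {p : ℕ} (hp : p.Prime) : σ 2 p = p ^ 2 + 1 := by
  simpa [Finset.sum_range_succ, add_comm] using sigma_apply_prime_pow (k := 2) (i := 1) hp

theorem sigma_two_prime_ne {b p : ℕ} (hp : p.Prime) : σ 2 p ≠ p ^ 2 + b * p := by
  rw [sigma_two_prime hp]
  intro h
  have hbp : b * p = 1 := by omega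
  have := hp.two_le
  nlinarith [Nat.eq_one_of_mul_eq_one_left hbp]

theorem sigma_two_mul_primes_ne {b p q : ℕ} (hb3 : b ≠ 3) (hp : p.Prime) (hq : q.Prime) :
    σ 2 (p * q) ≠ (p * q) ^ 2 + b * (p * q) := by
  rcases eq_or_ne p q with rfl | hpq
  · rw [← sq, ← pow_mul, sigma_apply_prime_pow hp]
    simp only [Finset.sum_range_succ, Finset.sum_range_zero]
    intro h
    have := hp.two_le
    ring_nf at h
    rcases Nat.lt_or_ge b 2 with hb | hb <;> nlinarith
  · rw [isMultiplicative_sigma.map_mul_of_coprime ((Nat.coprime_primes hp hq).mpr hpq),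
      sigma_two_prime hp, sigma_two_prime hq]
    intro h
    exact sq_add_sq_add_one_ne_mul hb3 hp.pos hq.pos (by nlinarith)

theorem le_cube_of_sigma_two_eq {b n : ℕ} (hb3 : b ≠ 3) (hn : 2 ≤ n)
    (h : σ 2 n = n ^ 2 + b * n) : n ≤ b ^ 3 := by
  have hp : n.minFac.Prime := Nat.minFac_prime (by omega)
  set p := n.minFac
  obtain ⟨m, hnm⟩ := n.minFac_dvd
  have hp2 := hp.two_le
  have hm : 0 < m := Nat.pos_of_ne_zero (by rintro rfl; omega)
  have hmb : m ≤ b * p := by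
    have := pow_add_pow_le_sigma (k := 2) (by omega) (Dvd.intro_left p hnm.symm) (by nlinarith)
    rw [hnm] at this h
    nlinarith
  rcases eq_or_ne m 1 with rfl | hm1
  · rw [mul_one] at hnm
    exact absurd (hnm ▸ h) (sigma_two_prime_ne hp)
  by_cases hmp : m.Prime
  · exact absurd (hnm ▸ h) (sigma_two_mul_primes_ne hb3 hp hmp)
  have hpm : p ≤ m.minFac :=
    Nat.minFac_le_of_dvd (Nat.minFac_prime hm1).two_le
      ((Nat.minFac_dvd m).trans (Dvd.intro_left p hnm.symm))
  have hpm2 : p ^ 2 ≤ m := (Nat.pow_le_pow_left hpm 2).trans (Nat.minFac_sq_le_self hm hmp)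
  have hpb : p ≤ b := by nlinarith
  calc n = p * m := hnm
    _ ≤ b * (b * b) := Nat.mul_le_mul hpb (hmb.trans (Nat.mul_le_mul_left b hpb))
    _ = b ^ 3 := by ring

theorem stmt_0_general (b : ℕ) (hb3 : b ≠ 3) :
    {n : ℕ | 0 < n ∧ ArithmeticFunction.sigma 2 n = n ^ 2 + b * n}.Finite := by
  refine (Set.finite_Iic (b ^ 3 + 1)).subset fun n ⟨_, h⟩ => Set.mem_Iic.mpr ?_
  rcases Nat.lt_or_ge n 2 with hn | hn
  · omega
  · exact (le_cube_of_sigma_two_eq hb3 hn h).trans (Nat.le_succ _)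

/-- For any fixed positive integer `b ≠ 3`, there are only finitely many positive
integers `n` with `σ₂(n) - n² = b·n`, i.e. the sum of squares of proper divisors
of `n` equals `b·n`. -/
theorem stmt_0 (b : ℕ) (hb : 0 < b) (hb3 : b ≠ 3) :
    {n : ℕ | 0 < n ∧ ArithmeticFunction.sigma 2 n = n ^ 2 + b * n}.Finite :=
  stmt_0_general b hb3
end

section
/- There is no positive integer n satisfying σ₂(n) − n² = 2n, i.e., no positive integer n whose sum of squares of proper divisors equals 2n. -/
/-!
Write `s(n)` for the sum of the squares of the proper divisors of `n`. If `n = a * b` with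
`1 < a`, `1 < b` and `a ≠ b`, then `1`, `a`, `b` are distinct proper divisors, so
`s(n) ≥ 1 + a² + b² > 2ab = 2n`. Splitting off a prime factor `p` of `n`, this leaves only
`n = 1`, `n = p` and `n = p²`, where `s(n)` is `0`, `1` and `1 + p²` respectively.
-/

open Finset

namespace Nat

theorem sum_sq_properDivisors_prime_sq {p : ℕ} (hp : p.Prime) :
    ∑ d ∈ (p ^ 2).properDivisors, d ^ 2 = 1 + p ^ 2 := by
  simp [sum_properDivisors_prime_nsmul hp, sum_range_succ]

theorem two_mul_lt_sum_sq_properDivisors_mul {a b : ℕ} (ha : 1 < a) (hb : 1 < b) (hab : a ≠ b) :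
    2 * (a * b) < ∑ d ∈ (a * b).properDivisors, d ^ 2 := by
  have hsub : ({1, a, b} : Finset ℕ) ⊆ (a * b).properDivisors := by
    simp only [insert_subset_iff, singleton_subset_iff, mem_properDivisors]
    refine ⟨⟨one_dvd _, by nlinarith⟩, ⟨dvd_mul_right a b, by nlinarith⟩,
      ⟨dvd_mul_left b a, by nlinarith⟩⟩
  calc 2 * (a * b) ≤ a ^ 2 + b ^ 2 := by rw [← mul_assoc]; exact two_mul_le_add_sq a b
    _ < 1 + a ^ 2 + b ^ 2 := by omega
    _ = ∑ d ∈ {1, a, b}, d ^ 2 := by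
      rw [sum_insert (by simp only [mem_insert, mem_singleton]; omega), sum_pair hab, one_pow,
        add_assoc]
    _ ≤ ∑ d ∈ (a * b).properDivisors, d ^ 2 := sum_le_sum_of_subset hsub

theorem sum_sq_properDivisors_ne_two_mul {n : ℕ} (hn : 0 < n) :
    ∑ d ∈ n.properDivisors, d ^ 2 ≠ 2 * n := by
  rcases eq_or_ne n 1 with rfl | hn1
  · simp
  obtain ⟨p, hp, m, rfl⟩ := exists_prime_and_dvd hn1
  have hm0 : m ≠ 0 := by rintro rfl; simp at hn
  rcases eq_or_ne m 1 with rfl | hm1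
  · rw [mul_one, hp.sum_properDivisors]
    omega
  rcases eq_or_ne p m with rfl | hpm
  · rw [← sq, sum_sq_properDivisors_prime_sq hp]
    nlinarith [hp.two_le]
  · exact (two_mul_lt_sum_sq_properDivisors_mul hp.one_lt (by omega) hpm).ne'

end Nat

/-- There is no positive integer `n` with `σ₂(n) - n² = 2n`. -/
theorem stmt_2 : ¬ ∃ n : ℕ, 0 < n ∧ ArithmeticFunction.sigma 2 n = n ^ 2 + 2 * n := by
  rintro ⟨n, hn, h⟩
  rw [ArithmeticFunction.sigma_apply, ← Nat.insert_self_properDivisors hn.ne',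
    sum_insert Nat.self_notMem_properDivisors] at h
  exact Nat.sum_sq_properDivisors_ne_two_mul hn (by omega)
end

section
/- A positive integer n satisfies σ₂(n) − n² = 3n (i.e., n is an F-perfect number) if and only if there exists k ≥ 1 such that n = F_{2k−1}·F_{2k+1}, where both F_{2k−1} and F_{2k+1} are prime numbers. -/
/-!
Write `σ₂(n) - n² = 3n` as `∑_{d ∣ n, d < n} d² = 3n`. For a prime power `p ^ k` the left side is
`≡ 1 [MOD p]`, so it fails. If primes `p ≠ q` divide `n = p * q * r`, the two proper divisors `q * r`
and `p * r` alone give `r * (p² + q²) ≤ 3 * p * q`, forcing `r = 1`. For `n = p * q` the equation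
becomes `p² + q² + 1 = 3 * p * q`, whose solutions with `p < q` all descend to `(1, 2)` by the
Vieta jump `(a, b) ↦ (3 * a - b, a)`; since `F_m + F_{m+4} = 3 * F_{m+2}`, they are exactly the pairs
`(F_{2k-1}, F_{2k+1})`.
-/

open scoped ArithmeticFunction.sigma

namespace Nat

theorem fib_add_fib_add_four (m : ℕ) : fib m + fib (m + 4) = 3 * fib (m + 2) := by
  simp only [fib_add_two, show m + 4 = m + 2 + 2 from rfl]
  ring

theorem sq_add_sq_add_one_eq_three_mul_iff {a b c : ℕ} (h : a + c = 3 * b) :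
    a ^ 2 + b ^ 2 + 1 = 3 * a * b ↔ b ^ 2 + c ^ 2 + 1 = 3 * b * c := by
  constructor <;> intro h' <;> nlinarith

theorem fib_sq_add_fib_sq_add_one (k : ℕ) :
    fib (2 * k + 1) ^ 2 + fib (2 * k + 3) ^ 2 + 1 = 3 * fib (2 * k + 1) * fib (2 * k + 3) := by
  induction k with
  | zero => decide
  | succ k ih =>
    exact (sq_add_sq_add_one_eq_three_mul_iff (fib_add_fib_add_four (2 * k + 1))).1 ih

theorem exists_fib_of_sq_add_sq_add_one_eq {p q : ℕ} (hpq : p < q)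
    (h : p ^ 2 + q ^ 2 + 1 = 3 * p * q) : ∃ k, p = fib (2 * k + 1) ∧ q = fib (2 * k + 3) := by
  induction q using Nat.strong_induction_on generalizing p with
  | _ q ih =>
  have hq : q < 3 * p := by nlinarith
  obtain ⟨c, hc⟩ : ∃ c, c + q = 3 * p := ⟨3 * p - q, by omega⟩
  have hc' : c ^ 2 + p ^ 2 + 1 = 3 * c * p := (sq_add_sq_add_one_eq_three_mul_iff hc).2 h
  have hcp : c ≤ p := by nlinarith
  rcases hcp.lt_or_eq with hcp | rfl
  · obtain ⟨k, rfl, rfl⟩ := ih p hpq hcp hc'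
    refine ⟨k + 1, rfl, ?_⟩
    have : fib (2 * k + 1) + fib (2 * k + 5) = 3 * fib (2 * k + 3) := fib_add_fib_add_four _
    change q = fib (2 * k + 5)
    omega
  · obtain rfl : c = 1 := by nlinarith
    exact ⟨0, rfl, by change q = 2; omega⟩

theorem eq_one_of_sum_sq_properDivisors_le {p q r : ℕ} (hp : 1 < p) (hq : 1 < q) (hpq : p ≠ q)
    (hr : 0 < r) (h : ∑ d ∈ (p * q * r).properDivisors, d ^ 2 ≤ 3 * (p * q * r)) : r = 1 := by
  have hsub : {q * r, p * r} ⊆ (p * q * r).properDivisors := by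
    simp only [Finset.insert_subset_iff, Finset.singleton_subset_iff, mem_properDivisors]
    refine ⟨⟨⟨p, by ring⟩, ?_⟩, ⟨q, by ring⟩, ?_⟩
    · rw [mul_assoc]; exact lt_mul_left (by positivity) hp
    · rw [mul_right_comm]; exact lt_mul_right (by positivity) hq
  have hne : q * r ≠ p * r := fun h => hpq (eq_of_mul_eq_mul_right hr h).symm
  have hsq : (q * r) ^ 2 + (p * r) ^ 2 ≤ 3 * (p * q * r) :=
    (Finset.sum_pair hne).symm.trans_le ((Finset.sum_le_sum_of_subset hsub).trans h)
  have hr' : r * (p ^ 2 + q ^ 2) ≤ 3 * (p * q) :=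
    le_of_mul_le_mul_left (by nlinarith) hr
  nlinarith [sq_nonneg ((p : ℤ) - q), Nat.mul_pos (by omega : 0 < p) (by omega : 0 < q)]

end Nat

namespace ArithmeticFunction

theorem sigma_two_prime_pow_ne {p k : ℕ} (hp : p.Prime) (hk : k ≠ 0) :
    σ 2 (p ^ k) ≠ (p ^ k) ^ 2 + 3 * p ^ k := by
  intro h
  have hdvd : p ∣ σ 2 (p ^ k) := h ▸ dvd_add (dvd_pow (dvd_pow_self p hk) two_ne_zero)
    (dvd_mul_of_dvd_right (dvd_pow_self p hk) 3)
  rw [sigma_apply_prime_pow hp, Finset.sum_range_succ', zero_mul, pow_zero] at hdvd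
  exact hp.one_lt.ne' (Nat.dvd_one.1 ((Nat.dvd_add_right
    (Finset.dvd_sum fun i _ => dvd_pow_self p (by positivity))).1 hdvd))

theorem sigma_two_mul_eq_iff {p q : ℕ} (hp : p.Prime) (hq : q.Prime) (hpq : p ≠ q) :
    σ 2 (p * q) = (p * q) ^ 2 + 3 * (p * q) ↔ p ^ 2 + q ^ 2 + 1 = 3 * p * q := by
  rw [isMultiplicative_sigma.map_mul_of_coprime ((Nat.coprime_primes hp hq).2 hpq), sigma_apply,
    sigma_apply, hp.sum_divisors, hq.sum_divisors, one_pow,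
    show (p ^ 2 + 1) * (q ^ 2 + 1) = (p * q) ^ 2 + (p ^ 2 + q ^ 2 + 1) by ring, add_right_inj,
    mul_assoc]

theorem exists_primes_eq_mul_of_sigma_two_eq {n : ℕ} (hn : 0 < n) (h : σ 2 n = n ^ 2 + 3 * n) :
    ∃ p q, p.Prime ∧ q.Prime ∧ p < q ∧ n = p * q := by
  have hn1 : n ≠ 1 := by rintro rfl; simp at h
  have hp : n.minFac.Prime := Nat.minFac_prime hn1
  by_cases hpow : ∀ {d}, d.Prime → d ∣ n → d = n.minFac
  · have hpow := Nat.eq_prime_pow_of_unique_prime_dvd hn.ne' hpow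
    refine (sigma_two_prime_pow_ne hp (fun hk => hn1 ?_) (hpow ▸ h)).elim
    rwa [hk, pow_zero] at hpow
  push Not at hpow
  obtain ⟨q, hq, hqn, hqp⟩ := hpow
  obtain ⟨r, hr⟩ : n.minFac * q ∣ n :=
    ((Nat.coprime_primes hp hq).2 hqp.symm).mul_dvd_of_dvd_of_dvd (Nat.minFac_dvd n) hqn
  rw [sigma_apply, ← Nat.cons_self_properDivisors hn.ne', Finset.sum_cons] at h
  have hr1 : r = 1 := by
    refine Nat.eq_one_of_sum_sq_properDivisors_le hp.one_lt hq.one_lt hqp.symm ?_ ?_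
    · exact Nat.pos_of_ne_zero (by rintro rfl; rw [mul_zero] at hr; omega)
    · rw [← hr]; omega
  exact ⟨n.minFac, q, hp, hq, (Nat.minFac_le_of_dvd hq.two_le hqn).lt_of_ne hqp.symm,
    by rwa [hr1, mul_one] at hr⟩

end ArithmeticFunction

/-- A positive integer `n` satisfies `σ₂(n) - n² = 3n` (is `F`-perfect) iff
`n = F_{2k-1} · F_{2k+1}` for some `k ≥ 1` with both factors Fibonacci primes. -/
theorem stmt_3 (n : ℕ) (hn : 0 < n) :
    ArithmeticFunction.sigma 2 n = n ^ 2 + 3 * n ↔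
      ∃ k : ℕ, 1 ≤ k ∧ n = Nat.fib (2 * k - 1) * Nat.fib (2 * k + 1) ∧
        (Nat.fib (2 * k - 1)).Prime ∧ (Nat.fib (2 * k + 1)).Prime := by
  constructor
  · intro h
    obtain ⟨p, q, hp, hq, hpq, rfl⟩ :=
      ArithmeticFunction.exists_primes_eq_mul_of_sigma_two_eq hn h
    have heq := (ArithmeticFunction.sigma_two_mul_eq_iff hp hq hpq.ne).1 h
    obtain ⟨k, rfl, rfl⟩ := Nat.exists_fib_of_sq_add_sq_add_one_eq hpq heq
    exact ⟨k + 1, Nat.le_add_left 1 k, rfl, hp, hq⟩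
  · rintro ⟨k, hk, rfl, hp, hq⟩
    obtain ⟨k, rfl⟩ := Nat.exists_eq_add_of_le' hk
    have hlt : Nat.fib (2 * k + 1) < Nat.fib (2 * k + 3) := by
      rw [Nat.fib_add_two]
      exact Nat.lt_add_of_pos_right (Nat.fib_pos.2 (by omega))
    exact (ArithmeticFunction.sigma_two_mul_eq_iff hp hq hlt.ne).2 (Nat.fib_sq_add_fib_sq_add_one k)
end

section
/- If n = p·q where p < q are primes and n divides σ₃(n), then n = 6. -/
/-!
Since `σ₃(pq) = (1 + p³)(1 + q³)` and `p` is coprime to `1 + p³`, the hypothesis says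
`p ∣ 1 + q³` and `q ∣ 1 + p³`. Factor `1 + x³ = (x + 1)(x² - x + 1)`. As `q > p`, the prime `q`
divides `p + 1` only if `q = p + 1`, i.e. `(p, q) = (2, 3)`; otherwise `q ∣ p² - p + 1`. Then
either `p ∣ q + 1`, which a size comparison shows forces `(p, q) = (2, 3)` again, or the pair
`p < q` divides each other's `x² - x + 1`, which is impossible by Vieta-style descent.
-/

open ArithmeticFunction

theorem sigma_apply_prime {k p : ℕ} (hp : p.Prime) : sigma k p = 1 + p ^ k := by
  simpa [Finset.sum_range_succ, add_comm] using sigma_apply_prime_pow (k := k) (i := 1) hp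

theorem sigma_apply_mul_of_primes {k p q : ℕ} (hp : p.Prime) (hq : q.Prime) (hpq : p ≠ q) :
    sigma k (p * q) = (1 + p ^ k) * (1 + q ^ k) := by
  rw [isMultiplicative_sigma.map_mul_of_coprime ((Nat.coprime_primes hp hq).mpr hpq),
    sigma_apply_prime hp, sigma_apply_prime hq]

theorem Nat.coprime_self_one_add_pow (p : ℕ) {k : ℕ} (hk : k ≠ 0) : p.Coprime (1 + p ^ k) := by
  obtain ⟨j, rfl⟩ := Nat.exists_eq_succ_of_ne_zero hk
  rw [pow_succ', Nat.coprime_add_mul_left_right]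
  exact Nat.coprime_one_right p

theorem Nat.Prime.eq_two_of_prime_succ {p : ℕ} (hp : p.Prime) (hp' : (p + 1).Prime) : p = 2 := by
  by_contra hne
  have hodd : ¬Even p := fun h => hne (hp.even_iff.mp h)
  have := hp'.even_iff.mp (Nat.even_add_one.mpr hodd)
  have := hp.two_le
  omega

/-- Descent: writing `a² - a + 1 = b c` gives a smaller pair `c < a` with the same property. -/
theorem not_dvd_sq_sub_add_one_of_lt (a b : ℕ) (hab : a < b)
    (hba : (b : ℤ) ∣ (a : ℤ) ^ 2 - a + 1) (hab' : (a : ℤ) ∣ (b : ℤ) ^ 2 - b + 1) : False := by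
  induction a using Nat.strong_induction_on generalizing b with
  | _ a IH =>
    obtain ⟨c, hc⟩ := hba
    have hbZ : (a : ℤ) < b := by exact_mod_cast hab
    rcases Nat.eq_zero_or_pos a with rfl | ha
    · rw [Int.natCast_zero, zero_dvd_iff] at hab'
      nlinarith
    have haZ : (1 : ℤ) ≤ a := by exact_mod_cast ha
    have hc_pos : 0 < c := by nlinarith
    have hc_lt : c < a := by nlinarith
    have hbc : (a : ℤ) ∣ b * c - 1 := ⟨a - 1, by linarith⟩
    obtain ⟨k, hk⟩ := hbc
    have hcop : IsCoprime (a : ℤ) b := ⟨-k, c, by linarith⟩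
    -- `b² (c² - c + 1) ≡ (bc)² - b (bc) + b² ≡ b² - b + 1 (mod a)` since `bc ≡ 1`.
    have hdvd : (a : ℤ) ∣ (b : ℤ) ^ 2 * (c ^ 2 - c + 1) := by
      have : (b : ℤ) ^ 2 * (c ^ 2 - c + 1) = (b ^ 2 - b + 1) + (b * c - 1) * (b * c - b + 1) := by
        ring
      rw [this, hk]
      exact dvd_add hab' ⟨k * (b * c - b + 1), by ring⟩
    lift c to ℕ using hc_pos.le
    exact IH c (by exact_mod_cast hc_lt) a (by exact_mod_cast hc_lt)
      (hcop.pow_right.dvd_of_dvd_mul_left hdvd) ⟨b, by linarith⟩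

theorem Int.eq_two_three_of_dvd_add_one_of_dvd_sq_sub_add_one {p q : ℤ} (hp : 2 ≤ p) (hpq : p < q)
    (hpq1 : p ∣ q + 1) (hqp2 : q ∣ p ^ 2 - p + 1) : p = 2 ∧ q = 3 := by
  obtain ⟨m, hm⟩ := hpq1
  obtain ⟨c, hc⟩ := hqp2
  have hc_nonneg : 0 ≤ c := by nlinarith
  -- `qc ≡ -c (mod p)` and `qc = p² - p + 1 ≡ 1`, so `p ∣ c + 1`.
  have hpc : p ∣ c + 1 := ⟨m * c - p + 1, by nlinarith⟩
  have hc_ge : p ≤ c + 1 := Int.le_of_dvd (by omega) hpc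
  have : (p - 1) * (q - p) ≤ 1 := by nlinarith
  constructor <;> nlinarith

theorem Nat.Prime.eq_two_three_of_dvd_one_add_cube {p q : ℕ} (hp : p.Prime) (hq : q.Prime)
    (hpq : p < q) (hpq3 : p ∣ 1 + q ^ 3) (hqp3 : q ∣ 1 + p ^ 3) : p = 2 ∧ q = 3 := by
  have factor (x : ℕ) : ((1 + x ^ 3 : ℕ) : ℤ) = (x + 1) * (x ^ 2 - x + 1) := by push_cast; ring
  have hpZ : (p : ℤ) ∣ (q + 1) * (q ^ 2 - q + 1) := by rw [← factor]; exact_mod_cast hpq3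
  have hqZ : (q : ℤ) ∣ (p + 1) * (p ^ 2 - p + 1) := by rw [← factor]; exact_mod_cast hqp3
  rcases (Nat.prime_iff_prime_int.mp hq).dvd_mul.mp hqZ with hq1 | hq2
  · have hq1 : q ∣ p + 1 := by exact_mod_cast hq1
    have hqp : q = p + 1 := le_antisymm (Nat.le_of_dvd p.succ_pos hq1) hpq
    have := hp.eq_two_of_prime_succ (hqp ▸ hq)
    omega
  rcases (Nat.prime_iff_prime_int.mp hp).dvd_mul.mp hpZ with hp1 | hp2
  · exact_mod_cast Int.eq_two_three_of_dvd_add_one_of_dvd_sq_sub_add_one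
      (by exact_mod_cast hp.two_le) (by exact_mod_cast hpq) hp1 hq2
  · exact (not_dvd_sq_sub_add_one_of_lt p q hpq hq2 hp2).elim

/-- If `n = p·q` with primes `p < q` and `n ∣ σ₃(n)`, then `n = 6`. -/
theorem stmt_6 (n p q : ℕ) (hp : p.Prime) (hq : q.Prime) (hpq : p < q)
    (hn : n = p * q) (hdvd : n ∣ ArithmeticFunction.sigma 3 n) : n = 6 := by
  subst hn
  rw [sigma_apply_mul_of_primes hp hq hpq.ne] at hdvd
  have hp3 : p ∣ 1 + q ^ 3 :=
    (p.coprime_self_one_add_pow three_ne_zero).dvd_of_dvd_mul_left (dvd_of_mul_right_dvd hdvd)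
  have hq3 : q ∣ 1 + p ^ 3 :=
    (q.coprime_self_one_add_pow three_ne_zero).dvd_of_dvd_mul_right (dvd_of_mul_left_dvd hdvd)
  obtain ⟨rfl, rfl⟩ := hp.eq_two_three_of_dvd_one_add_cube hq hpq hp3 hq3
  rfl
end

section
/- If n = 2^α · p where α ≥ 1, p is an odd prime, and n divides σ₃(n), then n is an even perfect number, i.e., n = 2^{s−1}(2^s − 1) for some s such that 2^s − 1 is prime. -/
/-!
By multiplicativity, `σ₃(2^α p) = σ₃(2^α) (1 + p³)`, where `7 σ₃(2^α) = 8 (2^α)³ - 1` is odd.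
Hence `p ∣ σ₃(2^α)` and `2^α ∣ 1 + p³ = (p + 1)(p² - p + 1)`, so `2^α ∣ p + 1`; write
`p + 1 = 2^α t`. Multiplying `8 (2^α)³ ≡ 1 (mod p)` by `t³` and using `2^α t ≡ 1` gives
`p ∣ t³ - 8 = (t - 2)(t² + 2t + 4)`. As `|t - 2| < p`, either `t = 2`, i.e. `p = 2^(α+1) - 1`, or
`p ∣ t² + 2t + 4`; in the latter case `p ≡ -1 (mod t)` forces `2^α ≤ 12`, and the cases `α ≤ 3`
are checked by computation.
-/

open ArithmeticFunction
open scoped ArithmeticFunction.sigma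

namespace ArithmeticFunction

theorem sigma_three_two_pow_mul_seven_add_one (α : ℕ) :
    σ 3 (2 ^ α) * 7 + 1 = 8 * (2 ^ α) ^ 3 := by
  rw [sigma_apply_prime_pow Nat.prime_two, ← pow_mul, mul_comm α, pow_mul,
    show (2 : ℕ) ^ 3 = 8 by norm_num, ← pow_succ']
  simp_rw [mul_comm _ 3, pow_mul]
  exact geom_sum_mul_add 7 (α + 1)

theorem odd_sigma_three_two_pow (α : ℕ) : Odd (σ 3 (2 ^ α)) := by
  have h := sigma_three_two_pow_mul_seven_add_one α
  exact Nat.odd_iff.mpr (by omega)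

theorem sigma_three_apply_prime {p : ℕ} (hp : p.Prime) : σ 3 p = 1 + p ^ 3 := by
  simpa [Finset.sum_range_succ] using sigma_apply_prime_pow (k := 3) (i := 1) hp

theorem sigma_three_two_pow_mul_prime {α p : ℕ} (hp : p.Prime) (hodd : Odd p) :
    σ 3 (2 ^ α * p) = σ 3 (2 ^ α) * (1 + p ^ 3) := by
  rw [isMultiplicative_sigma.map_mul_of_coprime ((Nat.coprime_two_left.mpr hodd).pow_left α),
    sigma_three_apply_prime hp]

set_option maxRecDepth 10000 in
theorem succ_eq_two_pow_succ_of_dvd_sigma_three_two_pow {α p : ℕ} (hα : α < 4) (hp : p.Prime)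
    (hpσ : p ∣ σ 3 (2 ^ α)) (h2 : 2 ^ α ∣ p + 1) : p + 1 = 2 ^ (α + 1) := by
  have key : ∀ α < 4, ∀ p ∈ Nat.divisors (σ 3 (2 ^ α)), p.Prime → 2 ^ α ∣ p + 1 →
      p + 1 = 2 ^ (α + 1) := by decide
  exact key α hα p (Nat.mem_divisors.mpr ⟨hpσ, (odd_sigma_three_two_pow α).pos.ne'⟩) hp h2

end ArithmeticFunction

theorem two_pow_dvd_succ_of_dvd_one_add_cube {α p : ℕ} (hodd : Odd p) (h : 2 ^ α ∣ 1 + p ^ 3) :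
    2 ^ α ∣ p + 1 := by
  obtain ⟨m, rfl⟩ := hodd
  rw [show 1 + (2 * m + 1) ^ 3 = (2 * m + 1 + 1) * (2 * (2 * m ^ 2 + m) + 1) by ring] at h
  exact ((Nat.coprime_two_left.mpr (odd_two_mul_add_one _)).pow_left α).dvd_of_dvd_mul_right h

theorem dvd_cube_sub_eight {R : Type*} [CommRing R] {p a t : R} (h : p ∣ 8 * a ^ 3 - 1)
    (hpat : p + 1 = a * t) : p ∣ t ^ 3 - 8 := by
  obtain ⟨c, hc⟩ := h
  exact ⟨8 * (p ^ 2 + 3 * p + 3) - t ^ 3 * c, by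
    linear_combination (-8 * ((p + 1) ^ 2 + (p + 1) * (a * t) + (a * t) ^ 2)) * hpat - t ^ 3 * hc⟩

theorem le_twelve_of_dvd_sq_add_two_mul_add_four {p a t : ℕ} (hpat : p + 1 = a * t)
    (h : p ∣ t ^ 2 + 2 * t + 4) : a ≤ 12 := by
  obtain ⟨k, hk⟩ := h
  have ht : 0 < t := Nat.pos_of_ne_zero (by rintro rfl; simp at hpat)
  have hk0 : 0 < k := Nat.pos_of_ne_zero (by rintro rfl; simp at hk)
  have hak : a * t * k = t ^ 2 + 2 * t + 4 + k := by rw [← hpat]; linarith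
  -- `p ≡ -1 (mod t)`
  have htk : t ∣ k + 4 := by
    have : t ∣ a * t * k - (t ^ 2 + 2 * t) := Nat.dvd_sub ⟨a * k, by ring⟩ ⟨t + 2, by ring⟩
    rwa [hak, show t ^ 2 + 2 * t + 4 + k - (t ^ 2 + 2 * t) = k + 4 by omega] at this
  have htk' : t ≤ k + 4 := Nat.le_of_dvd (by omega) htk
  have : a * k * t ≤ (12 * k) * t := by nlinarith
  nlinarith [Nat.le_of_mul_le_mul_right this ht]

theorem eq_two_of_dvd_sigma_three_two_pow {α p t : ℕ} (hp : p.Prime)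
    (hpσ : p ∣ σ 3 (2 ^ α)) (ht : p + 1 = 2 ^ α * t) : t = 2 := by
  have hcube : (p : ℤ) ∣ (t - 2) * (t ^ 2 + 2 * t + 4) := by
    have h8 : (p : ℤ) ∣ 8 * ((2 : ℤ) ^ α) ^ 3 - 1 := by
      obtain ⟨c, hc⟩ := hpσ
      have h := congrArg (Nat.cast : ℕ → ℤ) (sigma_three_two_pow_mul_seven_add_one α)
      push_cast [hc] at h
      exact ⟨7 * c, by linear_combination (-1 : ℤ) * h⟩
    have := dvd_cube_sub_eight h8 (t := (t : ℤ)) (by exact_mod_cast ht)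
    rwa [show (t : ℤ) ^ 3 - 8 = (t - 2) * (t ^ 2 + 2 * t + 4) by ring] at this
  have ht1 : 1 ≤ t := Nat.pos_of_ne_zero (by rintro rfl; simp at ht)
  have htp : t ≤ p + 1 := ht ▸ Nat.le_mul_of_pos_left t (by positivity)
  rcases (Nat.prime_iff_prime_int.mp hp).dvd_mul.mp hcube with h | h
  · have := Int.eq_zero_of_abs_lt_dvd h (by rw [abs_lt]; have := hp.two_le; omega)
    omega
  · have hα : α < 4 := by
      have := le_twelve_of_dvd_sq_add_two_mul_add_four ht (by exact_mod_cast h)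
      by_contra!
      have := Nat.pow_le_pow_right (show 0 < 2 by norm_num) this
      omega
    have := succ_eq_two_pow_succ_of_dvd_sigma_three_two_pow hα hp hpσ ⟨t, ht⟩
    rw [pow_succ, ht] at this
    exact Nat.eq_of_mul_eq_mul_left (by positivity) this

theorem stmt_7_general (n α p : ℕ) (hp : p.Prime) (hodd : Odd p)
    (hn : n = 2 ^ α * p) (hdvd : n ∣ ArithmeticFunction.sigma 3 n) :
    ∃ s : ℕ, (2 ^ s - 1).Prime ∧ n = 2 ^ (s - 1) * (2 ^ s - 1) := by
  subst hn
  rw [sigma_three_two_pow_mul_prime hp hodd] at hdvd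
  have hpσ : p ∣ σ 3 (2 ^ α) := by
    have hcop : p.Coprime (1 + p ^ 2 * p) :=
      (Nat.coprime_add_mul_right_right p 1 _).mpr (Nat.coprime_one_right p)
    rw [← pow_succ] at hcop
    exact hcop.dvd_of_dvd_mul_right ((dvd_mul_left p _).trans hdvd)
  obtain ⟨t, ht⟩ : 2 ^ α ∣ p + 1 := two_pow_dvd_succ_of_dvd_one_add_cube hodd <|
    ((Nat.coprime_two_left.mpr (odd_sigma_three_two_pow α)).pow_left α).dvd_of_dvd_mul_left
      ((dvd_mul_right _ _).trans hdvd)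
  obtain rfl := eq_two_of_dvd_sigma_three_two_pow hp hpσ ht
  have hp' : p = 2 ^ (α + 1) - 1 := by rw [pow_succ]; omega
  exact ⟨α + 1, hp' ▸ hp, by rw [← hp', Nat.add_sub_cancel]⟩

/-- If `n = 2^α · p` with `α ≥ 1`, `p` an odd prime, and `n ∣ σ₃(n)`, then `n`
is an even perfect number, i.e. `n = 2^(s-1) * (2^s - 1)` with `2^s - 1` prime. -/
theorem stmt_7 (n α p : ℕ) (hα : 1 ≤ α) (hp : p.Prime) (hodd : Odd p)
    (hn : n = 2 ^ α * p) (hdvd : n ∣ ArithmeticFunction.sigma 3 n) :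
    ∃ s : ℕ, (2 ^ s - 1).Prime ∧ n = 2 ^ (s - 1) * (2 ^ s - 1) :=
  stmt_7_general n α p hp hodd hn hdvd
end

section
/- If n is an even perfect number with n ≠ 28, then n divides σ₃(n). -/
/-!
By Euler, an even perfect number is `n = 2 ^ k * p` with `p = 2 ^ (k + 1) - 1` prime, so
`σ₃(n) = σ₃(2 ^ k) * (p ^ 3 + 1)`. The factor `p ^ 3 + 1` is divisible by `p + 1 = 2 ^ (k + 1)`,
and `7 * σ₃(2 ^ k) = 8 ^ (k + 1) - 1` is divisible by `2 ^ (k + 1) - 1 = p`; so `p ∣ σ₃(2 ^ k)`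
unless `p = 7`, i.e. `n = 28`.
-/

open ArithmeticFunction
open scoped ArithmeticFunction.sigma

namespace Nat

theorem sigma_prime_pow_mul_add_one {p : ℕ} (hp : p.Prime) (m k : ℕ) :
    σ m (p ^ k) * (p ^ m - 1) + 1 = (p ^ m) ^ (k + 1) := by
  obtain ⟨x, hx⟩ := exists_eq_add_one_of_ne_zero (pow_pos hp.pos m).ne'
  simp_rw [sigma_apply_prime_pow hp, pow_mul', hx, Nat.add_sub_cancel]
  exact geom_sum_mul_add x (k + 1)

theorem sigma_one_two_pow (k : ℕ) : σ 1 (2 ^ k) = mersenne (k + 1) := by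
  have h := sigma_prime_pow_mul_add_one prime_two 1 k
  rw [pow_one] at h
  rw [mersenne]
  omega

theorem add_one_dvd_sigma_prime {p k : ℕ} (hp : p.Prime) (hk : Odd k) : p + 1 ∣ σ k p := by
  have h : σ k p = p ^ k + 1 ^ k := by
    simpa [Finset.sum_range_succ, add_comm] using sigma_apply_prime_pow (k := k) (i := 1) hp
  rw [h]
  exact hk.nat_add_dvd_pow_add_pow p 1

theorem mersenne_dvd_sigma_three_two_pow {k : ℕ} (h : Coprime (mersenne (k + 1)) 7) :
    mersenne (k + 1) ∣ σ 3 (2 ^ k) := by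
  have hcube : mersenne (k + 1) ∣ (2 ^ 3) ^ (k + 1) - 1 := by
    simpa only [mersenne, ← pow_mul, mul_comm, one_pow] using
      Nat.sub_dvd_pow_sub_pow (2 ^ (k + 1)) 1 3
  rw [← sigma_prime_pow_mul_add_one prime_two 3 k, Nat.add_sub_cancel] at hcube
  exact h.dvd_of_dvd_mul_right hcube

theorem Perfect.exists_eq_two_pow_mul_mersenne_of_even {n : ℕ} (hperf : n.Perfect)
    (heven : Even n) : ∃ k, (mersenne (k + 1)).Prime ∧ n = 2 ^ k * mersenne (k + 1) := by
  obtain ⟨k, m, hm, rfl⟩ := exists_eq_two_pow_mul_odd hperf.2.ne'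
  have hk : k ≠ 0 := by
    rintro rfl
    rw [pow_zero, one_mul] at heven
    exact not_even_iff_odd.2 hm heven
  have hM : 1 < mersenne (k + 1) := one_lt_mersenne.2 (by omega)
  have hcop : Coprime (2 ^ k) m := (coprime_two_left.2 hm).pow_left k
  have hσ : mersenne (k + 1) * σ 1 m = (mersenne (k + 1) + 1) * m := by
    have h := (perfect_iff_sum_divisors_eq_two_mul hperf.2).1 hperf
    rw [← sigma_one_apply, isMultiplicative_sigma.map_mul_of_coprime hcop, sigma_one_two_pow,
      ← mul_assoc, ← pow_succ', ← succ_mersenne] at h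
    exact h
  obtain ⟨j, rfl⟩ : mersenne (k + 1) ∣ m :=
    (coprime_self_add_right.2 (coprime_one_right _)).dvd_of_dvd_mul_left ⟨σ 1 m, hσ.symm⟩
  have hsum : ∑ d ∈ (mersenne (k + 1) * j).properDivisors, d = j := by
    rw [mul_comm (_ + 1), mul_assoc] at hσ
    have h := Nat.eq_of_mul_eq_mul_left (by omega) hσ
    rw [sigma_one_apply, sum_divisors_eq_sum_properDivisors_add_self] at h
    linarith
  rcases sum_properDivisors_dvd (by rw [hsum]; exact dvd_mul_left j _) with h1 | h1
  · obtain rfl : j = 1 := hsum.symm.trans h1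
    rw [mul_one] at h1 ⊢
    exact ⟨k, sum_properDivisors_eq_one_iff_prime.1 h1, rfl⟩
  · have hj : 0 < j := Nat.pos_of_mul_pos_left hm.pos
    have h : mersenne (k + 1) * j = 1 * j := by rw [one_mul, ← h1, hsum]
    exact absurd (Nat.eq_of_mul_eq_mul_right hj h) hM.ne'

end Nat

/-- If `n` is an even perfect number with `n ≠ 28`, then `n ∣ σ₃(n)`. -/
theorem stmt_8 (n : ℕ) (hperf : Nat.Perfect n) (heven : Even n) (h28 : n ≠ 28) :
    n ∣ ArithmeticFunction.sigma 3 n := by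
  obtain ⟨k, hM, rfl⟩ := hperf.exists_eq_two_pow_mul_mersenne_of_even heven
  have hM7 : mersenne (k + 1) ≠ 7 := by
    intro h
    obtain rfl : k = 2 := by
      have : k + 1 = 3 := strictMono_mersenne.injective (h.trans rfl)
      omega
    exact h28 rfl
  have hcop : Nat.Coprime (2 ^ k) (mersenne (k + 1)) :=
    (Nat.coprime_two_left.2 (mersenne_odd.2 k.succ_ne_zero)).pow_left k
  have h2k : 2 ^ k ∣ σ 3 (mersenne (k + 1)) :=
    (pow_dvd_pow 2 k.le_succ).trans
      (succ_mersenne (k + 1) ▸ Nat.add_one_dvd_sigma_prime hM (by decide))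
  have hMσ : mersenne (k + 1) ∣ σ 3 (2 ^ k) :=
    Nat.mersenne_dvd_sigma_three_two_pow ((Nat.coprime_primes hM (by norm_num)).2 hM7)
  rw [isMultiplicative_sigma.map_mul_of_coprime hcop, mul_comm (σ 3 (2 ^ k))]
  exact mul_dvd_mul h2k hMσ
end

section
/- Let d be a positive odd integer. The equation x² − d·y² = −4 has a solution in integers x, y if and only if the equation u² − d·v² = −1 has a solution in integers u, v. -/
/-!
For `x` odd, `u + v√d := ((x + y√d) / 2)³` has integral coordinates: using `d y² = x² + 4`
one finds `u = x (x² + 3) / 2` and `v = y (x² + 1) / 2`, and its norm is `(-4 / 4)³ = -1`.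
For `x` even, `d y² = x² + 4` and the oddness of `d` force `y` to be even, and halving
`(x, y)` gives the solution.
-/

namespace Int

theorem exists_sq_sub_mul_sq_eq_neg_one_of_odd {d x y : ℤ} (hx : Odd x)
    (h : x ^ 2 - d * y ^ 2 = -4) : ∃ u v : ℤ, u ^ 2 - d * v ^ 2 = -1 := by
  obtain ⟨b, hb⟩ : Even (x ^ 2 + 1) := (hx.pow (n := 2)).add_one
  exact ⟨x * (b + 1), y * b, by linear_combination b ^ 2 * h + (2 * b + 1) * hb⟩

theorem exists_sq_sub_mul_sq_eq_neg_one_of_even {d x y : ℤ} (hd : Odd d) (hx : Even x)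
    (h : x ^ 2 - d * y ^ 2 = -4) : ∃ u v : ℤ, u ^ 2 - d * v ^ 2 = -1 := by
  obtain ⟨a, rfl⟩ := hx
  have hdy : Even (d * y ^ 2) := ⟨2 * a ^ 2 + 2, by linear_combination -h⟩
  have hy : Even y := by
    simpa [Int.even_mul, Int.not_even_iff_odd.mpr hd, Int.even_pow] using hdy
  obtain ⟨b, rfl⟩ := hy
  refine ⟨a, b, mul_left_cancel₀ (four_ne_zero (α := ℤ)) ?_⟩
  linear_combination h

end Int

theorem stmt_10_general (d : ℤ) (hodd : Odd d) :
    (∃ x y : ℤ, x ^ 2 - d * y ^ 2 = -4) ↔ (∃ u v : ℤ, u ^ 2 - d * v ^ 2 = -1) := by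
  constructor
  · rintro ⟨x, y, h⟩
    rcases Int.even_or_odd x with hx | hx
    · exact Int.exists_sq_sub_mul_sq_eq_neg_one_of_even hodd hx h
    · exact Int.exists_sq_sub_mul_sq_eq_neg_one_of_odd hx h
  · rintro ⟨u, v, h⟩
    exact ⟨2 * u, 2 * v, by linear_combination 4 * h⟩

/-- For a positive odd integer `d`, `x² - d·y² = -4` has an integer solution iff
`u² - d·v² = -1` has an integer solution. -/
theorem stmt_10 (d : ℤ) (hd : 0 < d) (hodd : Odd d) :
    (∃ x y : ℤ, x ^ 2 - d * y ^ 2 = -4) ↔ (∃ u v : ℤ, u ^ 2 - d * v ^ 2 = -1) :=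
  stmt_10_general d hodd
end

section
/- If d is a positive odd integer and integers x, y satisfy x² − d·y² = −4, then u = x(x² + 3)/2 and v = (x² + 1)y/2 are integers satisfying u² − d·v² = −1. -/
/-! The number `(x + y√d)/2` has norm `-1`; its cube is `u + v√d`, which has norm `(-1)³ = -1`.
Integrality is a parity argument: `d` odd forces `x ≡ y (mod 2)`. -/

theorem Int.two_dvd_mul_sq_add_three (x : ℤ) : 2 ∣ x * (x ^ 2 + 3) := by
  rw [← even_iff_two_dvd]
  rcases Int.even_or_odd x with hx | hx
  · exact hx.mul_right _
  · exact (hx.pow.add_odd (by decide)).mul_left _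

theorem Int.even_iff_even_of_sq_sub_mul_sq_eq {d x y c : ℤ} (hd : Odd d) (hc : Even c)
    (h : x ^ 2 - d * y ^ 2 = c) : Even x ↔ Even y := by
  have hxy : Even (x ^ 2 - d * y ^ 2) := h ▸ hc
  rw [Int.even_sub, Int.even_mul, Int.even_pow' two_ne_zero, Int.even_pow' two_ne_zero] at hxy
  simpa [Int.not_even_iff_odd.mpr hd] using hxy

theorem Int.two_dvd_sq_add_one_mul {x y : ℤ} (hxy : Even x ↔ Even y) : 2 ∣ (x ^ 2 + 1) * y := by
  rw [← even_iff_two_dvd]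
  rcases Int.even_or_odd x with hx | hx
  · exact (hxy.mp hx).mul_left _
  · exact (hx.pow.add_one).mul_right _

theorem sq_mul_sq_add_three_sub_mul_sq {R : Type*} [CommRing R] {d x y : R}
    (h : x ^ 2 - d * y ^ 2 = -4) :
    (x * (x ^ 2 + 3)) ^ 2 - d * ((x ^ 2 + 1) * y) ^ 2 = -4 := by
  linear_combination (x ^ 2 + 1) ^ 2 * h

theorem stmt_11_general (d x y : ℤ) (hodd : Odd d)
    (h : x ^ 2 - d * y ^ 2 = -4) :
    (2 : ℤ) ∣ x * (x ^ 2 + 3) ∧ (2 : ℤ) ∣ (x ^ 2 + 1) * y ∧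
      (x * (x ^ 2 + 3) / 2) ^ 2 - d * ((x ^ 2 + 1) * y / 2) ^ 2 = -1 := by
  have hdu := Int.two_dvd_mul_sq_add_three x
  have hdv := Int.two_dvd_sq_add_one_mul
    (Int.even_iff_even_of_sq_sub_mul_sq_eq hodd (by decide) h)
  refine ⟨hdu, hdv, ?_⟩
  have hnorm := sq_mul_sq_add_three_sub_mul_sq h
  obtain ⟨u, hu⟩ := hdu
  obtain ⟨v, hv⟩ := hdv
  rw [hu, hv] at hnorm ⊢
  simp only [Int.mul_ediv_cancel_left _ two_ne_zero]
  linarith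

/-- If `d` is a positive odd integer and `x² - d·y² = -4`, then
`u = x(x²+3)/2` and `v = (x²+1)y/2` are integers with `u² - d·v² = -1`. -/
theorem stmt_11 (d x y : ℤ) (hd : 0 < d) (hodd : Odd d)
    (h : x ^ 2 - d * y ^ 2 = -4) :
    (2 : ℤ) ∣ x * (x ^ 2 + 3) ∧ (2 : ℤ) ∣ (x ^ 2 + 1) * y ∧
      (x * (x ^ 2 + 3) / 2) ^ 2 - d * ((x ^ 2 + 1) * y / 2) ^ 2 = -1 :=
  stmt_11_general d x y hodd h
end

section
/- The positive integer solutions of 1 + x² + y² = 3xy with 1 ≤ x < y are exactly the pairs (x, y) = (F_{2k−1}, F_{2k+1}) for k ≥ 1. -/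
/-!
The equation `1 + x² + y² = 3xy` is quadratic in each variable, so a solution `(x, y)` with
`x < y` has the Vieta partner `(3x - y, x)`, again a solution since the two roots in the
first variable sum to `3x`; their product is `1 + x²`, which forces `3x - y < x` once `x ≥ 2`.
Descent therefore ends at the minimal solution `(1, 2) = (F₁, F₃)`, and the identity
`F_{n} + F_{n+4} = 3 F_{n+2}` shows that the jump `(x, y) ↦ (y, 3y - x)` climbs the odd
Fibonacci pairs.
-/

theorem Nat.fib_add_fib_add_four_s12 (n : ℕ) : fib n + fib (n + 4) = 3 * fib (n + 2) := by
  have h2 : fib (n + 2) = fib n + fib (n + 1) := fib_add_two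
  have h3 : fib (n + 3) = fib (n + 1) + fib (n + 2) := fib_add_two
  have h4 : fib (n + 4) = fib (n + 2) + fib (n + 3) := fib_add_two
  omega

theorem vieta_jump {R : Type*} [CommRing R] {x y z : R}
    (h : 1 + x ^ 2 + y ^ 2 = 3 * x * y) (hz : x + z = 3 * y) :
    1 + y ^ 2 + z ^ 2 = 3 * y * z := by
  linear_combination h + (z - x) * hz

theorem Nat.vieta_jump {x y z : ℕ}
    (h : 1 + x ^ 2 + y ^ 2 = 3 * x * y) (hz : x + z = 3 * y) :
    1 + y ^ 2 + z ^ 2 = 3 * y * z := by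
  exact_mod_cast _root_.vieta_jump (x := (x : ℤ)) (y := y) (z := z)
    (by exact_mod_cast h) (by exact_mod_cast hz)

theorem fib_two_mul_add_one_solution (j : ℕ) :
    1 + Nat.fib (2 * j + 1) ^ 2 + Nat.fib (2 * j + 3) ^ 2
      = 3 * Nat.fib (2 * j + 1) * Nat.fib (2 * j + 3) := by
  induction j with
  | zero => norm_num
  | succ j ih => exact Nat.vieta_jump ih (Nat.fib_add_fib_add_four_s12 (2 * j + 1))

theorem exists_solution_descent {x y : ℕ} (h : 1 + x ^ 2 + y ^ 2 = 3 * x * y)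
    (hx : 2 ≤ x) (hxy : x < y) :
    ∃ x' < x, y + x' = 3 * x ∧ 1 + x' ^ 2 + x ^ 2 = 3 * x' * x := by
  have hy : y < 3 * x := by nlinarith
  obtain ⟨x', hsum⟩ : ∃ x', y + x' = 3 * x := ⟨3 * x - y, by omega⟩
  have hsol := Nat.vieta_jump (by linarith [h] : 1 + y ^ 2 + x ^ 2 = 3 * y * x) hsum
  have hprod : x' * y = 1 + x ^ 2 := by nlinarith
  exact ⟨x', by nlinarith, hsum, by linarith⟩

theorem exists_fib_of_solution {x y : ℕ} (hxy : x < y) (h : 1 + x ^ 2 + y ^ 2 = 3 * x * y) :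
    ∃ j, x = Nat.fib (2 * j + 1) ∧ y = Nat.fib (2 * j + 3) := by
  induction x using Nat.strong_induction_on generalizing y with
  | _ x ih =>
    rcases Nat.lt_or_ge x 2 with hx | hx
    · obtain rfl | rfl : x = 0 ∨ x = 1 := by omega
      · simp at h
      · have hy : y = 2 := by nlinarith
        exact ⟨0, rfl, hy⟩
    · obtain ⟨x', hx'x, hsum, hsol⟩ := exists_solution_descent h hx hxy
      obtain ⟨j, rfl, rfl⟩ := ih x' hx'x hx'x hsol
      have hrec : Nat.fib (2 * j + 1) + Nat.fib (2 * j + 5) = 3 * Nat.fib (2 * j + 3) :=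
        Nat.fib_add_fib_add_four_s12 _
      exact ⟨j + 1, rfl, show y = Nat.fib (2 * j + 5) by omega⟩

theorem stmt_12_general (x y : ℕ) (hxy : x < y) :
    1 + x ^ 2 + y ^ 2 = 3 * x * y ↔
      ∃ k : ℕ, 1 ≤ k ∧ x = Nat.fib (2 * k - 1) ∧ y = Nat.fib (2 * k + 1) := by
  constructor
  · intro h
    obtain ⟨j, rfl, rfl⟩ := exists_fib_of_solution hxy h
    exact ⟨j + 1, by omega, by congr 1, rfl⟩
  · rintro ⟨k, hk, rfl, rfl⟩
    obtain ⟨j, rfl⟩ := Nat.exists_eq_add_of_le' hk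
    rw [show 2 * (j + 1) - 1 = 2 * j + 1 by omega]
    exact fib_two_mul_add_one_solution j

/-- The solutions of `1 + x² + y² = 3xy` with `1 ≤ x < y` are exactly the pairs
`(x, y) = (F_{2k-1}, F_{2k+1})` for `k ≥ 1`. -/
theorem stmt_12 (x y : ℕ) (hx : 1 ≤ x) (hxy : x < y) :
    1 + x ^ 2 + y ^ 2 = 3 * x * y ↔
      ∃ k : ℕ, 1 ≤ k ∧ x = Nat.fib (2 * k - 1) ∧ y = Nat.fib (2 * k + 1) :=
  stmt_12_general x y hxy
end

section
/- If k is a positive integer with k ≠ 3, then the equation 1 + x² + y² = k·x·y has no solution in positive integers x, y. -/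
/-!
Vieta jumping: for fixed `y`, the equation is a quadratic in `x` whose second root is
`k * y - x = (y ^ 2 + 1) / x`. If `y < x` this root lies strictly between `0` and `x`, so
replacing `x` by it gives a smaller positive solution. Descending, one reaches a solution
with `x = y`, where `(k - 2) * x ^ 2 = 1` forces `k = 3`.
-/

namespace MarkovType

lemma vieta_jump {k x y : ℤ} (hy : 0 < y) (hyx : y < x)
    (h : 1 + x ^ 2 + y ^ 2 = k * x * y) :
    0 < k * y - x ∧ k * y - x < x ∧ 1 + (k * y - x) ^ 2 + y ^ 2 = k * (k * y - x) * y := by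
  have hprod : (k * y - x) * x = y ^ 2 + 1 := by linear_combination -h
  refine ⟨?_, ?_, by linear_combination h⟩
  · exact pos_of_mul_pos_left (by rw [hprod]; positivity) (by omega)
  · nlinarith

lemma eq_three_of_diagonal {k x : ℤ} (h : 1 + x ^ 2 + x ^ 2 = k * x * x) : k = 3 := by
  have hunit : (k - 2) * x ^ 2 = 1 := by linear_combination -h
  rw [Int.eq_one_of_mul_eq_one_left (sq_nonneg x) hunit] at hunit
  omega

theorem eq_three_of_pos_solution {k x y : ℤ} (hx : 0 < x) (hy : 0 < y)
    (h : 1 + x ^ 2 + y ^ 2 = k * x * y) : k = 3 := by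
  induction hn : (x + y).toNat using Nat.strong_induction_on generalizing x y with
  | _ n ih =>
  wlog hyx : y ≤ x generalizing x y
  · exact this hy hx (by linear_combination h) (by omega) (by omega)
  rcases hyx.lt_or_eq with hlt | rfl
  · obtain ⟨hpos, hlt', hsol⟩ := vieta_jump hy hlt h
    exact ih _ (by omega) hpos hy hsol rfl
  · exact eq_three_of_diagonal h

end MarkovType

theorem stmt_15_general (k : ℕ) (hk3 : k ≠ 3) :
    ¬ ∃ x y : ℕ, 0 < x ∧ 0 < y ∧ 1 + x ^ 2 + y ^ 2 = k * x * y := by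
  rintro ⟨x, y, hx, hy, h⟩
  have hZ : 1 + (x : ℤ) ^ 2 + (y : ℤ) ^ 2 = (k : ℤ) * x * y := by exact_mod_cast h
  exact hk3 (by exact_mod_cast MarkovType.eq_three_of_pos_solution (by omega) (by omega) hZ)

/-- If `k` is a positive integer with `k ≠ 3`, then `1 + x² + y² = kxy` has no
solution in positive integers. -/
theorem stmt_15 (k : ℕ) (hk : 0 < k) (hk3 : k ≠ 3) :
    ¬ ∃ x y : ℕ, 0 < x ∧ 0 < y ∧ 1 + x ^ 2 + y ^ 2 = k * x * y :=
  stmt_15_general k hk3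
end

section
/- If k is an even positive integer, then the equation 1 + x² + y² = k·x·y has no solution in positive integers x, y. -/
/-!
Reduce modulo 4, where squares are 0 or 1. If `x, y` are both odd the left side is `3`, which is
odd; if exactly one is odd it is `2`, while `2mxy ≡ 0`; if both are even it is `1`, again odd.
-/

theorem ZMod.one_add_sq_add_sq_ne_two_mul_mul (a b c : ZMod 4) :
    1 + a ^ 2 + b ^ 2 ≠ 2 * c * a * b := by
  decide +revert

theorem Int.one_add_sq_add_sq_ne_two_mul_mul (x y m : ℤ) :
    1 + x ^ 2 + y ^ 2 ≠ 2 * m * x * y := by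
  intro h
  have h4 := congrArg (Int.cast : ℤ → ZMod 4) h
  push_cast at h4
  exact ZMod.one_add_sq_add_sq_ne_two_mul_mul _ _ _ h4

theorem stmt_16_general (k : ℕ) (hke : Even k) :
    ¬ ∃ x y : ℕ, 0 < x ∧ 0 < y ∧ 1 + x ^ 2 + y ^ 2 = k * x * y := by
  rintro ⟨x, y, -, -, h⟩
  obtain ⟨m, rfl⟩ := hke
  apply Int.one_add_sq_add_sq_ne_two_mul_mul x y m
  rw [two_mul]
  exact_mod_cast h

/-- If `k` is an even positive integer, then `1 + x² + y² = kxy` has no solution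
in positive integers. -/
theorem stmt_16 (k : ℕ) (hk : 0 < k) (hke : Even k) :
    ¬ ∃ x y : ℕ, 0 < x ∧ 0 < y ∧ 1 + x ^ 2 + y ^ 2 = k * x * y :=
  stmt_16_general k hke
end

section
/- If x and y are positive integers with y ≥ 2 such that xy − 1 divides x² − x + 1, then (x² − x + 1)/(xy − 1) = 1, i.e., x² − x + 1 = xy − 1. -/
/-!
Write `x² - x + 1 = q (xy - 1)`. Reducing mod `x` gives `x ∣ q + 1`, say `q + 1 = kx`, and
substituting back and cancelling `x` yields `q (y - 1) = 1 - (x - 1)(k - 1)`. Both factors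
`x - 1` and `k - 1` are nonnegative, so `q ≤ q (y - 1) ≤ 1`, while `q ≥ 1` by positivity.
-/

namespace Int

lemma mul_sub_one_eq_of_sq_sub_add_one_eq {x y q k : ℤ} (hx : x ≠ 0)
    (hq : x ^ 2 - x + 1 = q * (x * y - 1)) (hk : q + 1 = x * k) :
    q * (y - 1) = 1 - (x - 1) * (k - 1) := by
  have hcancel : x * (q * (y - 1)) = x * (1 - (x - 1) * (k - 1)) := by
    linear_combination (1 - x) * hk - hq
  exact mul_left_cancel₀ hx hcancel

lemma eq_one_of_sq_sub_add_one_eq_mul {x y q : ℤ} (hx : 1 ≤ x) (hy : 2 ≤ y)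
    (hq : x ^ 2 - x + 1 = q * (x * y - 1)) : q = 1 := by
  have hq_pos : 0 < q := by
    refine pos_of_mul_pos_left ?_ (by nlinarith : 0 ≤ x * y - 1)
    rw [← hq]
    nlinarith
  obtain ⟨k, hk⟩ : x ∣ q + 1 := ⟨y * q - x + 1, by linear_combination hq⟩
  have hk_pos : 0 < k := pos_of_mul_pos_right (by rw [← hk]; omega) (by omega)
  have hq_mul := mul_sub_one_eq_of_sq_sub_add_one_eq (by omega) hq hk
  have hq_le : q ≤ 1 := by
    calc q ≤ q * (y - 1) := le_mul_of_one_le_right hq_pos.le (by omega)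
      _ = 1 - (x - 1) * (k - 1) := hq_mul
      _ ≤ 1 := by nlinarith
  omega

end Int

/-- If `x, y` are positive integers with `y ≥ 2` and `xy - 1 ∣ x² - x + 1`,
then `x² - x + 1 = xy - 1`. -/
theorem stmt_18 (x y : ℕ) (hx : 0 < x) (hy : 2 ≤ y)
    (h : x * y - 1 ∣ x ^ 2 - x + 1) : x ^ 2 - x + 1 = x * y - 1 := by
  obtain ⟨q, hq⟩ := h
  have hxy : 1 ≤ x * y := Nat.one_le_iff_ne_zero.mpr (by positivity)
  have hq_int : (x : ℤ) ^ 2 - x + 1 = q * (x * y - 1) := by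
    have := congrArg (Nat.cast : ℕ → ℤ) hq
    push_cast [Nat.le_self_pow two_ne_zero x, hxy] at this
    linear_combination this
  have hq_one : (q : ℤ) = 1 :=
    Int.eq_one_of_sq_sub_add_one_eq_mul (by exact_mod_cast hx) (by exact_mod_cast hy) hq_int
  rw [hq, show q = 1 by exact_mod_cast hq_one, mul_one]
end

section
/- If x and y are positive integers with x ≥ y such that x divides y² − y + 1 and y divides x² − x + 1, then x = y = 1. -/
/-!
Vieta jumping. If `y < x` and `x * m = y² - y + 1`, then `m < y`, and `(y, m)` is again a
solution: modulo `y` we have `m * x ≡ 1`, so `m² (x² - x + 1) ≡ 1 - m + m²`. Descending on the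
larger entry ends at a solution with `x = y`, where `x ∣ x² - x + 1` forces `x = 1`.
-/

theorem dvd_sq_sub_self_add_one_of_mul_eq {R : Type*} [CommRing R] {x y m : R}
    (hm : x * m = y ^ 2 - y + 1) (hy : y ∣ x ^ 2 - x + 1) : y ∣ m ^ 2 - m + 1 := by
  have key : m ^ 2 - m + 1 = m ^ 2 * (x ^ 2 - x + 1) - y * ((y - 1) * (m * x + 1 - m)) := by
    linear_combination (-(m * x) - 1 + m) * hm
  rw [key]
  exact (hy.mul_left _).sub (dvd_mul_right _ _)

theorem Nat.cast_sq_sub_self_add_one {R : Type*} [CommRing R] (t : ℕ) :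
    ((t ^ 2 - t + 1 : ℕ) : R) = (t : R) ^ 2 - t + 1 := by
  rw [Nat.cast_add, Nat.cast_sub (Nat.le_self_pow two_ne_zero t)]
  push_cast
  ring

theorem Nat.dvd_sq_sub_self_add_one_of_mul_eq {x y m : ℕ}
    (hm : x * m = y ^ 2 - y + 1) (hy : y ∣ x ^ 2 - x + 1) : y ∣ m ^ 2 - m + 1 := by
  have hm' : (x : ℤ) * m = (y : ℤ) ^ 2 - y + 1 := by
    rw [← Nat.cast_sq_sub_self_add_one, ← hm, Nat.cast_mul]
  have hy' : (y : ℤ) ∣ (x : ℤ) ^ 2 - x + 1 := by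
    rw [← Nat.cast_sq_sub_self_add_one]
    exact Int.natCast_dvd_natCast.mpr hy
  rw [← Int.natCast_dvd_natCast, Nat.cast_sq_sub_self_add_one]
  exact _root_.dvd_sq_sub_self_add_one_of_mul_eq hm' hy'

theorem Nat.eq_one_of_dvd_sq_sub_self_add_one {x : ℕ} (h : x ∣ x ^ 2 - x + 1) : x = 1 := by
  have hx : x ∣ x ^ 2 - x := Nat.dvd_sub (dvd_pow_self x two_ne_zero) dvd_rfl
  exact Nat.dvd_one.mp ((Nat.dvd_add_right hx).mp h)

theorem Nat.lt_of_mul_eq_sq_sub_self_add_one {x y m : ℕ} (hy : 0 < y) (hyx : y < x)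
    (hm : x * m = y ^ 2 - y + 1) : m < y := by
  by_contra! hym
  have : y * y < x * m := Nat.mul_lt_mul_of_lt_of_le hyx hym (hy.trans_le hym)
  have : y ≤ y * y := Nat.le_mul_self y
  rw [sq] at hm
  omega

/-- If positive integers `x ≥ y` satisfy `x ∣ y² - y + 1` and `y ∣ x² - x + 1`,
then `x = y = 1`. -/
theorem stmt_19 (x y : ℕ) (hy : 0 < y) (hxy : y ≤ x)
    (h1 : x ∣ y ^ 2 - y + 1) (h2 : y ∣ x ^ 2 - x + 1) : x = 1 ∧ y = 1 := by
  induction x using Nat.strong_induction_on generalizing y with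
  | _ x ih =>
    rcases hxy.eq_or_lt with rfl | hyx
    · have hx := Nat.eq_one_of_dvd_sq_sub_self_add_one h2
      exact ⟨hx, hx⟩
    obtain ⟨m, hm⟩ := h1
    have hm_pos : 0 < m := Nat.pos_of_ne_zero (by rintro rfl; omega)
    obtain ⟨rfl, rfl⟩ : y = 1 ∧ m = 1 :=
      ih y hyx m hm_pos (Nat.lt_of_mul_eq_sq_sub_self_add_one hy hyx hm.symm).le
        (Nat.dvd_sq_sub_self_add_one_of_mul_eq hm.symm h2) ⟨x, by rw [hm, mul_comm]⟩
    omega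
end
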